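/- Let T be a well-separated tree metric over Σ, x, y ∈ Σⁿ, and s_r the r-simplification. Then dtw(x, y) ≤ dtw(s_r(x), s_r(y)) + nr/2. In particular, if dtw(x, y) > nr, then dtw(s_r(x), s_r(y)) > nr/2. -/
import Mathlib


open scoped BigOperators

variable {α : Type*}

/-- `xb` is the expansion of `x` obtained by replacing the `i`-th letter of `x`
with `ks[i] ≥ 1` consecutive copies of itself (equivalently, by extending runs). -/
def IsExpansionWith (x : List α) (ks : List ℕ) (xb : List α) : Prop :=
  ks.length = x.length ∧ (∀ k ∈ ks, 1 ≤ k) ∧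
    xb = (x.zip ks).flatMap fun p => List.replicate p.2 p.1

/-- `xb` is an expansion of `x` (obtained by extending runs). -/
def IsExpansion (x xb : List α) : Prop := ∃ ks, IsExpansionWith x ks xb

/-- The cost of a correspondence: sum of pointwise distances. -/
def corrCost (d : α → α → ℝ) (xb yb : List α) : ℝ :=
  ((xb.zip yb).map fun p => d p.1 p.2).sum

/-- A correspondence between `x` and `y`: a pair of equal-length expansions. -/
def IsCorrespondence (x y xb yb : List α) : Prop :=
  IsExpansion x xb ∧ IsExpansion y yb ∧ xb.length = yb.length

/-- Dynamic time warping distance: minimum cost of a correspondence. -/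
noncomputable def dtw (d : α → α → ℝ) (x y : List α) : ℝ :=
  sInf {c | ∃ xb yb, IsCorrespondence x y xb yb ∧ c = corrCost d xb yb}

/-- The maximal runs of equal letters of a list. -/
def runsOf [DecidableEq α] (x : List α) : List (List α) := x.splitBy (· == ·)

/-- Number of runs. -/
def numRuns [DecidableEq α] (x : List α) : ℕ := (runsOf x).length

/-- Length of the final run. -/
def lastRunLen [DecidableEq α] (x : List α) : ℕ := ((runsOf x).getLastD []).length

/-- Length of the `i`-th run (0-indexed). -/
def runLen [DecidableEq α] (x : List α) (i : ℕ) : ℕ := ((runsOf x).getD i []).length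

/-- The letter populating the `i`-th run (0-indexed). -/
def runLetter [DecidableEq α] [Inhabited α] (x : List α) (i : ℕ) : α :=
  ((runsOf x).getD i []).headI

/-- The concatenation of the first `k` runs of `x`. -/
def firstRuns [DecidableEq α] (k : ℕ) (x : List α) : List α := ((runsOf x).take k).flatten

/-- The prefix of `y` consisting of its first `ry` runs, up through the `oy`-th
letter of the `ry`-th run (runs are 1-indexed here). -/
def runPrefix [DecidableEq α] (ry oy : ℕ) (y : List α) : List α :=
  firstRuns (ry - 1) y ++ ((runsOf y).getD (ry - 1) []).take oy

/-- The subproblem `SP(x, y, rx, ry, oy)`: the minimum cost of a correspondence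
between the first `rx` runs of `x` and the prefix of `y` ending at the `oy`-th
letter of its `ry`-th run, under the constraint that the final (`ry`-th) run of
the `y`-prefix is not extended; `⊤` if no such correspondence exists. -/
noncomputable def SP [DecidableEq α] (d : α → α → ℝ) (x y : List α) (rx ry oy : ℕ) : EReal :=
  sInf ((fun p : List α × List α => ((corrCost d p.1 p.2 : ℝ) : EReal)) ''
    {p | IsCorrespondence (firstRuns rx x) (runPrefix ry oy y) p.1 p.2 ∧
         (0 < oy → lastRunLen p.2 = oy)})

/-- Generalized edit distance over a metric with null character `nul`:
insertion/deletion of `l` costs `d nul l`, substitution of `l` by `l'` costs `d l l'`. -/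
noncomputable def ged (d : α → α → ℝ) (nul : α) : List α → List α → ℝ
  | [], [] => 0
  | [], b :: ys => d nul b + ged d nul [] ys
  | a :: xs, [] => d nul a + ged d nul xs []
  | a :: xs, b :: ys =>
      min (d a b + ged d nul xs ys)
        (min (d nul a + ged d nul xs (b :: ys)) (d nul b + ged d nul (a :: xs) ys))
  termination_by x y => x.length + y.length

/-- Simple (Hamming/Levenshtein) edit distance: unit-cost insertions, deletions
and substitutions. -/
def edH [DecidableEq α] : List α → List α → ℕ
  | [], ys => ys.length
  | xs, [] => xs.length
  | a :: xs, b :: ys =>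
      min ((if a = b then 0 else 1) + edH xs ys)
        (min (1 + edH xs (b :: ys)) (1 + edH (a :: xs) ys))
  termination_by x y => x.length + y.length

/-- Simple edit distance with only unit-cost insertions and deletions. -/
def edS [DecidableEq α] : List α → List α → ℕ
  | [], ys => ys.length
  | xs, [] => xs.length
  | a :: xs, b :: ys =>
      if a = b then
        min (edS xs ys) (min (1 + edS xs (b :: ys)) (1 + edS (a :: xs) ys))
      else
        min (1 + edS xs (b :: ys)) (1 + edS (a :: xs) ys)
  termination_by x y => x.length + y.length

/-- The padded string `p(x) = ∅ x₁ ∅ x₂ ∅ ⋯ xₙ ∅`. -/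
def pad (nul : α) (x : List α) : List α := nul :: x.flatMap fun a => [a, nul]

/-- The `r`-simplification for edit distance: remove all letters of magnitude at most `r`. -/
noncomputable def sEd [MetricSpace α] (nul : α) (r : ℝ) (x : List α) : List α :=
  x.filter fun l => decide (r < dist nul l)


/-- A well-separated tree metric: a rooted edge-weighted tree (given by a parent
function) over the alphabet `σ`, with positive edge weights that are
nonincreasing along every root-to-leaf path. `weight v` is the weight of the
edge from `v` to its parent. -/
structure WSTree (σ : Type*) where
  root : σ
  parent : σ → σ
  weight : σ → ℝ
  parent_root : parent root = root
  weight_pos : ∀ v, v ≠ root → 0 < weight v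
  weight_mono : ∀ v, v ≠ root → parent v ≠ root → weight v ≤ weight (parent v)
  to_root : ∀ v, ∃ n, parent^[n] v = root

namespace WSTree

variable {σ : Type*}

/-- The edges (identified by their lower endpoint) on the path from `u` to the root. -/
def ancEdges (T : WSTree σ) (u : σ) : Set σ :=
  {w | w ≠ T.root ∧ ∃ k, T.parent^[k] u = w}

/-- The tree-metric distance: the maximum weight of an edge on the (unique simple)
path from `u` to `v` (the edges of which form the symmetric difference of the
two root-paths), and `0` if `u = v`. -/
noncomputable def dist (T : WSTree σ) (u v : σ) : ℝ :=
  sSup (T.weight '' (symmDiff (T.ancEdges u) (T.ancEdges v)))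

/-- `a` is the `r`-simplification of the letter `l`: the highest ancestor of `l`
reachable from `l` using only edges of weight at most `r / 4`. -/
def IsSimp (T : WSTree σ) (r : ℝ) (l a : σ) : Prop :=
  (∃ k, T.parent^[k] l = a ∧ ∀ j < k, T.weight (T.parent^[j] l) ≤ r / 4) ∧
    (a = T.root ∨ r / 4 < T.weight a)

end WSTree


section Aux

namespace WSTree
variable {σ : Type*} (T : WSTree σ)

lemma iterate_root (k : ℕ) : T.parent^[k] T.root = T.root :=
  Function.iterate_fixed T.parent_root k

lemma anc_root : T.ancEdges T.root = ∅ := by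
  ext w
  simp only [ancEdges, Set.mem_setOf_eq, Set.mem_empty_iff_false, iff_false, not_and]
  rintro hw ⟨k, hk⟩
  exact hw ((T.iterate_root k ▸ hk).symm)

lemma anc_iterate_subset (u : σ) (k : ℕ) : T.ancEdges (T.parent^[k] u) ⊆ T.ancEdges u := by
  rintro w ⟨hw, m, hm⟩
  exact ⟨hw, m + k, by rw [Function.iterate_add_apply]; exact hm⟩

lemma anc_antisymm {a b : σ} {k m : ℕ} (h1 : T.parent^[k] a = b)
    (h2 : T.parent^[m] b = a) : a = b := by
  rcases Nat.eq_zero_or_pos (k + m) with h | h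
  · obtain ⟨hk, hm⟩ := Nat.add_eq_zero.mp h
    subst hk; simpa using h1
  · have hfix : T.parent^[k + m] b = b := by
      rw [Function.iterate_add_apply, h2, h1]
    have hcyc : ∀ j, T.parent^[j * (k + m)] b = b := by
      intro j; induction j with
      | zero => simp
      | succ j ih =>
        rw [Nat.succ_mul, Function.iterate_add_apply, hfix, ih]
    obtain ⟨N, hN⟩ := T.to_root b
    have hb : b = T.root := by
      have h1' : N ≤ N * (k + m) := Nat.le_mul_of_pos_right N h
      calc b = T.parent^[N * (k + m)] b := (hcyc N).symm
        _ = T.parent^[N * (k + m) - N] (T.parent^[N] b) := by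
            rw [← Function.iterate_add_apply]; congr 1; omega
        _ = T.root := by rw [hN, iterate_root]
    rw [hb] at h2 ⊢
    rw [← h2, iterate_root]

lemma mem_anc_self {u : σ} (h : u ≠ T.root) : u ∈ T.ancEdges u := ⟨h, 0, rfl⟩

lemma weight_nonneg_of_mem_anc {u w : σ} (h : w ∈ T.ancEdges u) : 0 ≤ T.weight w :=
  (T.weight_pos w h.1).le

lemma dist_nonneg (u v : σ) : 0 ≤ T.dist u v := by
  apply Real.sSup_nonneg
  rintro x ⟨w, hw, rfl⟩
  rcases Set.mem_symmDiff.mp hw with ⟨h, _⟩ | ⟨h, _⟩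
  · exact T.weight_nonneg_of_mem_anc h
  · exact T.weight_nonneg_of_mem_anc h

/-- Edges of `u`'s root path that are not on `su`'s root path have weight `≤ r/4`. -/
lemma weight_le_of_not_anc_simp {r : ℝ} {u su w : σ} (hu : T.IsSimp r u su)
    (hw : w ∈ T.ancEdges u) (hw' : w ∉ T.ancEdges su) : T.weight w ≤ r / 4 := by
  obtain ⟨⟨k, hk, hle⟩, _⟩ := hu
  obtain ⟨hwr, j, hj⟩ := hw
  rcases lt_or_ge j k with h | h
  · rw [← hj]; exact hle j h
  · exfalso
    apply hw'
    refine ⟨hwr, j - k, ?_⟩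
    rw [← hk, ← Function.iterate_add_apply]
    rw [← hj]; congr 1; omega

/-- Key inequality: `dist u v ≤ dist (s u) (s v) + r/4`. -/
lemma dist_le_simp_dist [Fintype σ] {r : ℝ} (hr : 0 ≤ r) {u v su sv : σ}
    (hu : T.IsSimp r u su) (hv : T.IsSimp r v sv) :
    T.dist u v ≤ T.dist su sv + r / 4 := by
  have hr4 : 0 ≤ r / 4 := by linarith
  obtain ⟨⟨k, hk, _⟩, hsu⟩ := id hu
  obtain ⟨⟨m, hm, _⟩, hsv⟩ := id hv
  have hsubu : T.ancEdges su ⊆ T.ancEdges u := hk ▸ T.anc_iterate_subset u k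
  have hsubv : T.ancEdges sv ⊆ T.ancEdges v := hm ▸ T.anc_iterate_subset v m
  by_cases hss : su = sv
  · -- all edges in the symm diff have weight ≤ r/4
    subst hss
    have : T.dist u v ≤ r / 4 := by
      apply Real.sSup_le _ hr4
      rintro x ⟨w, hw, rfl⟩
      rcases Set.mem_symmDiff.mp hw with ⟨h1, h2⟩ | ⟨h1, h2⟩
      · exact T.weight_le_of_not_anc_simp hu h1 (fun hh => h2 (hsubv hh))
      · exact T.weight_le_of_not_anc_simp hv h1 (fun hh => h2 (hsubu hh))
    linarith [T.dist_nonneg su su]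
  · -- there is a heavy edge in symmDiff (anc su) (anc sv)
    have hex : ∃ e ∈ symmDiff (T.ancEdges su) (T.ancEdges sv), r / 4 < T.weight e := by
      by_cases h1 : su ∈ T.ancEdges sv
      · have hsvr : sv ≠ T.root := by
          rintro rfl
          rw [anc_root] at h1; exact h1
        refine ⟨sv, Set.mem_symmDiff.mpr (Or.inr ⟨T.mem_anc_self hsvr, ?_⟩), ?_⟩
        · rintro ⟨_, j, hj⟩
          obtain ⟨_, i, hi⟩ := h1
          exact hss (T.anc_antisymm hi hj).symm
        · rcases hsv with h | h
          · exact absurd h hsvr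
          · exact h
      · by_cases hsur : su = T.root
        · subst hsur
          have hsvr : sv ≠ T.root := fun h => hss h.symm
          refine ⟨sv, Set.mem_symmDiff.mpr (Or.inr ⟨T.mem_anc_self hsvr, ?_⟩), ?_⟩
          · rw [anc_root]; exact fun h => h
          · rcases hsv with h | h
            · exact absurd h hsvr
            · exact h
        · refine ⟨su, Set.mem_symmDiff.mpr (Or.inl ⟨T.mem_anc_self hsur, h1⟩), ?_⟩
          rcases hsu with h | h
          · exact absurd h hsur
          · exact h
    obtain ⟨e, he, hew⟩ := hex
    have hbdd : BddAbove (T.weight '' (symmDiff (T.ancEdges su) (T.ancEdges sv))) :=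
      (Set.toFinite _).bddAbove
    have hed : T.weight e ≤ T.dist su sv := le_csSup hbdd ⟨e, he, rfl⟩
    have : T.dist u v ≤ T.dist su sv := by
      apply Real.sSup_le _ (T.dist_nonneg su sv)
      rintro x ⟨w, hw, rfl⟩
      -- case analysis
      rcases Set.mem_symmDiff.mp hw with ⟨h1, h2⟩ | ⟨h1, h2⟩
      · by_cases hws : w ∈ T.ancEdges su
        · have : w ∉ T.ancEdges sv := fun hh => h2 (hsubv hh)
          exact le_csSup hbdd ⟨w, Set.mem_symmDiff.mpr (Or.inl ⟨hws, this⟩), rfl⟩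
        · exact le_trans (T.weight_le_of_not_anc_simp hu h1 hws) (le_trans hew.le hed)
      · by_cases hws : w ∈ T.ancEdges sv
        · have : w ∉ T.ancEdges su := fun hh => h2 (hsubu hh)
          exact le_csSup hbdd ⟨w, Set.mem_symmDiff.mpr (Or.inr ⟨hws, this⟩), rfl⟩
        · exact le_trans (T.weight_le_of_not_anc_simp hv h1 hws) (le_trans hew.le hed)
    linarith


end WSTree

lemma isExpansion_nil : IsExpansion ([] : List α) [] := ⟨[], rfl, by simp, by simp⟩

lemma isExpansion_nil_iff {xb : List α} : IsExpansion ([] : List α) xb ↔ xb = [] := by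
  constructor
  · rintro ⟨ks, h1, h2, h3⟩
    simpa using h3
  · rintro rfl; exact isExpansion_nil

lemma IsExpansion.ne_nil {a : α} {x xb : List α} (h : IsExpansion (a :: x) xb) : xb ≠ [] := by
  obtain ⟨ks, h1, h2, h3⟩ := h
  cases ks with
  | nil => simp at h1
  | cons k ks =>
    have hk : 1 ≤ k := h2 k (by simp)
    subst h3
    simp only [List.zip_cons_cons, List.flatMap_cons]
    intro h
    have h' := congrArg List.length h
    simp at h'
    omega

/-- Self expansion. -/
lemma isExpansion_self (x : List α) : IsExpansion x x := by
  refine ⟨List.replicate x.length 1, by simp, by simp, ?_⟩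
  induction x with
  | nil => simp
  | cons a x ih =>
    simp only [List.length_cons, List.replicate_succ, List.zip_cons_cons,
      List.flatMap_cons, List.replicate_one, List.singleton_append]
    rw [← ih]
    simp

/-- Decompose an expansion of `a :: x`. -/
lemma isExpansion_cons_elim {a : α} {x xb : List α} (h : IsExpansion (a :: x) xb) :
    ∃ t, xb = a :: t ∧ (IsExpansion (a :: x) t ∨ IsExpansion x t) := by
  obtain ⟨ks, h1, h2, h3⟩ := h
  cases ks with
  | nil => simp at h1
  | cons k ks =>
    have hk : 1 ≤ k := h2 k (by simp)
    rcases Nat.exists_eq_add_of_le hk with ⟨k', rfl⟩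
    subst h3
    simp only [List.zip_cons_cons, List.flatMap_cons, List.replicate_add,
      List.replicate_one, List.append_assoc, List.singleton_append]
    refine ⟨_, rfl, ?_⟩
    rcases Nat.eq_zero_or_pos k' with rfl | hk'
    · right
      exact ⟨ks, by simpa using h1, fun k hk => h2 k (by simp [hk]), by simp⟩
    · left
      refine ⟨k' :: ks, by simpa using h1, ?_, by simp⟩
      intro j hj
      rcases List.mem_cons.mp hj with rfl | hj
      · exact hk'
      · exact h2 j (by simp [hj])

/-- Prepend to an expansion: from an expansion of `x` or of `a::x`. -/
lemma isExpansion_cons_intro {a : α} {x t : List α}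
    (h : IsExpansion (a :: x) t ∨ IsExpansion x t) : IsExpansion (a :: x) (a :: t) := by
  rcases h with ⟨ks, h1, h2, h3⟩ | ⟨ks, h1, h2, h3⟩
  · cases ks with
    | nil => simp at h1
    | cons k ks =>
      refine ⟨(k + 1) :: ks, by simpa using h1, ?_, ?_⟩
      · intro j hj
        rcases List.mem_cons.mp hj with rfl | hj
        · omega
        · exact h2 j (by simp [hj])
      · subst h3
        simp [List.replicate_succ]
  · refine ⟨1 :: ks, by simpa using h1, ?_, ?_⟩
    · intro j hj
      rcases List.mem_cons.mp hj with rfl | hj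
      · exact le_refl 1
      · exact h2 j (by simp [hj])
    · subst h3; simp

lemma corrCost_nonneg {d : α → α → ℝ} (hd : ∀ u v, 0 ≤ d u v) (xb yb : List α) :
    0 ≤ corrCost d xb yb := by
  apply List.sum_nonneg
  intro c hc
  obtain ⟨p, _, rfl⟩ := List.mem_map.mp hc
  exact hd p.1 p.2

lemma corrCost_cons (d : α → α → ℝ) (a b : α) (xs ys : List α) :
    corrCost d (a :: xs) (b :: ys) = d a b + corrCost d xs ys := by
  simp [corrCost]

/-- Shortening: every correspondence admits one of length ≤ |x| + |y| with no larger cost. -/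
lemma shorten_aux {d : α → α → ℝ} (hd : ∀ u v, 0 ≤ d u v) :
    ∀ (n : ℕ) (xb yb x y : List α), xb.length ≤ n → IsCorrespondence x y xb yb →
    ∃ xb2 yb2, IsCorrespondence x y xb2 yb2 ∧ xb2.length ≤ x.length + y.length ∧
      corrCost d xb2 yb2 ≤ corrCost d xb yb := by
  intro n
  induction n with
  | zero =>
    intro xb yb x y hn ⟨hx, hy, hlen⟩
    have hxb : xb = [] := List.length_eq_zero_iff.mp (Nat.le_zero.mp hn)
    subst hxb
    have hyb : yb = [] := List.length_eq_zero_iff.mp hlen.symm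
    subst hyb
    have hxnil : x = [] := by
      cases x with
      | nil => rfl
      | cons b x' => exact absurd rfl hx.ne_nil
    have hynil : y = [] := by
      cases y with
      | nil => rfl
      | cons b y' => exact absurd rfl hy.ne_nil
    subst hxnil; subst hynil
    exact ⟨[], [], ⟨isExpansion_nil, isExpansion_nil, rfl⟩, by simp, le_refl _⟩
  | succ n IH =>
  intro xb yb x y hn ⟨hx, hy, hlen⟩
  match x, y with
  | [], y =>
    have hxb : xb = [] := isExpansion_nil_iff.mp hx
    subst hxb
    have hyb : yb = [] := List.length_eq_zero_iff.mp hlen.symm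
    subst hyb
    have hynil : y = [] := by
      cases y with
      | nil => rfl
      | cons b y' => exact absurd rfl hy.ne_nil
    subst hynil
    exact ⟨[], [], ⟨isExpansion_nil, isExpansion_nil, rfl⟩, by simp, le_refl _⟩
  | x, [] =>
    have hyb : yb = [] := isExpansion_nil_iff.mp hy
    subst hyb
    have hxb : xb = [] := List.length_eq_zero_iff.mp hlen
    subst hxb
    have hxnil : x = [] := by
      cases x with
      | nil => rfl
      | cons b x' => exact absurd rfl hx.ne_nil
    subst hxnil
    exact ⟨[], [], ⟨isExpansion_nil, isExpansion_nil, rfl⟩, by simp, le_refl _⟩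
  | a :: x', b :: y' =>
    obtain ⟨xt, rfl, hxt⟩ := isExpansion_cons_elim hx
    obtain ⟨yt, rfl, hyt⟩ := isExpansion_cons_elim hy
    have hlen' : xt.length = yt.length := by simpa using hlen
    have hxtlt : xt.length < (a :: xt).length := by simp
    have hdab : 0 ≤ d a b := hd a b
    rcases hxt with hxt | hxt
    · rcases hyt with hyt | hyt
      · -- both remain full: recurse dropping the first pair
        obtain ⟨xb2, yb2, hc2, hl2, hcost2⟩ :=
          IH xt yt (a :: x') (b :: y') (by simp at hn; omega) ⟨hxt, hyt, hlen'⟩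
        refine ⟨xb2, yb2, hc2, hl2, ?_⟩
        rw [corrCost_cons]
        linarith
      · -- y side advanced
        obtain ⟨xb2, yb2, ⟨hcx, hcy, hcl⟩, hl2, hcost2⟩ :=
          IH xt yt (a :: x') y' (by simp at hn; omega) ⟨hxt, hyt, hlen'⟩
        refine ⟨a :: xb2, b :: yb2,
          ⟨isExpansion_cons_intro (Or.inl hcx), isExpansion_cons_intro (Or.inr hcy),
            by simp [hcl]⟩, by simp only [List.length_cons] at hl2 ⊢; omega, ?_⟩
        rw [corrCost_cons, corrCost_cons]
        linarith
    · rcases hyt with hyt | hyt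
      · obtain ⟨xb2, yb2, ⟨hcx, hcy, hcl⟩, hl2, hcost2⟩ :=
          IH xt yt x' (b :: y') (by simp at hn; omega) ⟨hxt, hyt, hlen'⟩
        refine ⟨a :: xb2, b :: yb2,
          ⟨isExpansion_cons_intro (Or.inr hcx), isExpansion_cons_intro (Or.inl hcy),
            by simp [hcl]⟩, by simp only [List.length_cons] at hl2 ⊢; omega, ?_⟩
        rw [corrCost_cons, corrCost_cons]
        linarith
      · obtain ⟨xb2, yb2, ⟨hcx, hcy, hcl⟩, hl2, hcost2⟩ :=
          IH xt yt x' y' (by simp at hn; omega) ⟨hxt, hyt, hlen'⟩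
        refine ⟨a :: xb2, b :: yb2,
          ⟨isExpansion_cons_intro (Or.inr hcx), isExpansion_cons_intro (Or.inr hcy),
            by simp [hcl]⟩, by simp only [List.length_cons] at hl2 ⊢; omega, ?_⟩
        rw [corrCost_cons, corrCost_cons]
        linarith

/-- Transport an expansion of `x.map s` back to `x`. -/
lemma isExpansion_map_elim (s : α → α) {x xb' : List α} (h : IsExpansion (x.map s) xb') :
    ∃ xb, IsExpansion x xb ∧ xb.map s = xb' := by
  obtain ⟨ks, h1, h2, h3⟩ := h
  refine ⟨(x.zip ks).flatMap fun p => List.replicate p.2 p.1,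
    ⟨ks, by simpa using h1, h2, rfl⟩, ?_⟩
  subst h3
  clear h1 h2
  induction x generalizing ks with
  | nil => simp
  | cons a x ih =>
    cases ks with
    | nil => simp
    | cons k ks => simp [ih]

/-- Cost comparison under a simplification map. -/
lemma corrCost_le_map {d : α → α → ℝ} {s : α → α} {c : ℝ}
    (hds : ∀ u v, d u v ≤ d (s u) (s v) + c) (hc : 0 ≤ c) :
    ∀ xb yb : List α, corrCost d xb yb ≤
      corrCost d (xb.map s) (yb.map s) + (xb.zip yb).length * c := by
  intro xb
  induction xb with
  | nil => intro yb; simp [corrCost]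
  | cons a xs ih =>
    intro yb
    cases yb with
    | nil => simp [corrCost]
    | cons b ys =>
      simp only [List.map_cons, corrCost_cons, List.zip_cons_cons, List.length_cons]
      have := ih ys
      have := hds a b
      push_cast
      linarith

lemma shorten {d : α → α → ℝ} (hd : ∀ u v, 0 ≤ d u v) (xb yb x y : List α)
    (h : IsCorrespondence x y xb yb) :
    ∃ xb2 yb2, IsCorrespondence x y xb2 yb2 ∧ xb2.length ≤ x.length + y.length ∧
      corrCost d xb2 yb2 ≤ corrCost d xb yb :=
  shorten_aux hd xb.length xb yb x y (le_refl _) h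

end Aux

/-- `dtw(x, y) ≤ dtw(s_r(x), s_r(y)) + nr/2`; in particular if `dtw(x, y) > nr`
then `dtw(s_r(x), s_r(y)) > nr/2`. -/
theorem stmt10 {σ : Type*} [Fintype σ] (T : WSTree σ) (r : ℝ) (hr : 1 ≤ r)
    (s : σ → σ) (hs : ∀ l, T.IsSimp r l (s l)) (n : ℕ) (x y : List σ)
    (hx : x.length = n) (hy : y.length = n) :
    dtw T.dist x y ≤ dtw T.dist (x.map s) (y.map s) + n * r / 2 ∧
    (n * r < dtw T.dist x y → n * r / 2 < dtw T.dist (x.map s) (y.map s)) := by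
  classical
  have hr0 : (0 : ℝ) ≤ r := by linarith
  have hd0 : ∀ u v, 0 ≤ T.dist u v := T.dist_nonneg
  have hds : ∀ u v, T.dist u v ≤ T.dist (s u) (s v) + r / 4 := fun u v =>
    T.dist_le_simp_dist hr0 (hs u) (hs v)
  have hmain : dtw T.dist x y ≤ dtw T.dist (x.map s) (y.map s) + n * r / 2 := by
    have hset : dtw T.dist (x.map s) (y.map s) =
        sInf {c | ∃ xb yb, IsCorrespondence (x.map s) (y.map s) xb yb ∧
          c = corrCost T.dist xb yb} := rfl
    have hne : Set.Nonempty {c | ∃ xb yb, IsCorrespondence (x.map s) (y.map s) xb yb ∧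
        c = corrCost T.dist xb yb} :=
      ⟨_, x.map s, y.map s,
        ⟨isExpansion_self _, isExpansion_self _, by simp [hx, hy]⟩, rfl⟩
    have key : ∀ c ∈ {c | ∃ xb yb, IsCorrespondence (x.map s) (y.map s) xb yb ∧
        c = corrCost T.dist xb yb}, dtw T.dist x y - n * r / 2 ≤ c := by
      rintro c ⟨xb', yb', hcorr', rfl⟩
      obtain ⟨xb₂, yb₂, hcorr₂, hlen₂, hcost₂⟩ := shorten hd0 xb' yb' _ _ hcorr'
      obtain ⟨xb, hxb, hxbm⟩ := isExpansion_map_elim s hcorr₂.1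
      obtain ⟨yb, hyb, hybm⟩ := isExpansion_map_elim s hcorr₂.2.1
      have hleq : xb.length = yb.length := by
        have h := hcorr₂.2.2
        rw [← hxbm, ← hybm] at h
        simpa using h
      have h1 : dtw T.dist x y ≤ corrCost T.dist xb yb := by
        apply csInf_le
        · refine ⟨0, ?_⟩
          rintro c ⟨xb0, yb0, _, rfl⟩
          exact corrCost_nonneg hd0 _ _
        · exact ⟨xb, yb, ⟨hxb, hyb, hleq⟩, rfl⟩
      have h2 := corrCost_le_map hds (by linarith) xb yb
      rw [hxbm, hybm] at h2
      have hlenz : ((xb.zip yb).length : ℝ) ≤ 2 * n := by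
        have hxb2 : xb.length = xb₂.length := by rw [← hxbm]; simp
        have hb : xb₂.length ≤ 2 * n := by
          have := hlen₂
          simp only [List.length_map, hx, hy] at this
          omega
        rw [List.length_zip, hleq, min_self, ← hleq, hxb2]
        exact_mod_cast hb
      have h3 : ((xb.zip yb).length : ℝ) * (r / 4) ≤ 2 * n * (r / 4) :=
        mul_le_mul_of_nonneg_right hlenz (by linarith)
      have : dtw T.dist x y ≤ corrCost T.dist xb' yb' + 2 * n * (r / 4) := by
        linarith
      linarith
    rw [hset]
    linarith [le_csInf hne key]
  exact ⟨hmain, fun h => by linarith⟩
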